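/- arXiv:1205.6167 — 2 statements merged into one kernel-verified Lean document; each statement's English description precedes it below -/
import Mathlib

section
/- Let (Ω, F, P) be a probability space, U : Ω → ℝ a measurable random variable and Z : Ω → ℝ an integrable random variable. Then E[Z | σ(U)] = 0 P-almost surely if and only if E[Z · 1{U ≤ u}] = 0 for Lebesgue-almost every u ∈ ℝ. -/
open MeasureTheory Set

/-- Single-projection equivalence (III ⟺ V of Lemma 2): `E[Z | σ(U)] = 0` a.s. iff
`E[Z · 1{U ≤ u}] = 0` for Lebesgue-a.e. `u ∈ ℝ`. -/
theorem stmt_4 {Ω : Type*} [MeasurableSpace Ω]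
    (P : Measure Ω) [IsProbabilityMeasure P]
    (U : Ω → ℝ) (hU : Measurable U)
    (Z : Ω → ℝ) (hZ : Integrable Z P) :
    (P[Z | MeasurableSpace.comap U inferInstance] =ᵐ[P] 0) ↔
      ∀ᵐ u ∂(volume : Measure ℝ), ∫ ω in {ω | U ω ≤ u}, Z ω ∂P = 0 := by
  have hm : MeasurableSpace.comap U inferInstance ≤ _ := hU.comap_le
  haveI : SigmaFinite (P.trim hm) := by
    have : IsFiniteMeasure (P.trim hm) := by
      constructor
      rw [trim_measurableSet_eq hm (@MeasurableSet.univ Ω _)]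
      exact measure_lt_top _ _
    infer_instance
  constructor
  · intro h
    refine Filter.Eventually.of_forall fun u => ?_
    have hs : MeasurableSet[MeasurableSpace.comap U inferInstance] (U ⁻¹' Iic u) :=
      ⟨Iic u, measurableSet_Iic, rfl⟩
    have hset : {ω | U ω ≤ u} = U ⁻¹' Iic u := rfl
    rw [hset, ← setIntegral_condExp hm hZ hs]
    calc ∫ ω in U ⁻¹' Iic u, (P[Z|MeasurableSpace.comap U inferInstance]) ω ∂P
        = ∫ ω in U ⁻¹' Iic u, (0 : ℝ) ∂P := integral_congr_ae (ae_restrict_of_ae h)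
      _ = 0 := integral_zero _ _
  · intro h
    -- Step 1: the set integral vanishes for EVERY u, by right-continuity.
    have hdense : Dense {u : ℝ | ∫ ω in {ω | U ω ≤ u}, Z ω ∂P = 0} :=
      Measure.dense_of_ae h
    have hmeas : ∀ w : ℝ, MeasurableSet {ω | U ω ≤ w} := fun w =>
      show MeasurableSet (U ⁻¹' Iic w) from hU measurableSet_Iic
    have hall : ∀ u : ℝ, ∫ ω in {ω | U ω ≤ u}, Z ω ∂P = 0 := by
      intro u
      have hvex : ∀ n : ℕ, ∃ v, (∫ ω in {ω | U ω ≤ v}, Z ω ∂P = 0) ∧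
          v ∈ Ioo u (u + 1 / (n + 1)) := by
        intro n
        have hlt : u < u + 1 / (n + 1 : ℝ) := lt_add_of_pos_right u (by positivity)
        obtain ⟨v, hv1, hv2⟩ := hdense.exists_between hlt
        exact ⟨v, hv1, hv2⟩
      choose v hv0 hv1 using hvex
      have hvt : Filter.Tendsto v Filter.atTop (nhds u) := by
        have h1 : Filter.Tendsto (fun n : ℕ => u + 1 / (n + 1 : ℝ)) Filter.atTop (nhds u) := by
          have := (tendsto_const_nhds :
              Filter.Tendsto (fun _ : ℕ => u) Filter.atTop (nhds u)).add
            tendsto_one_div_add_atTop_nhds_zero_nat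
          simpa using this
        exact tendsto_of_tendsto_of_tendsto_of_le_of_le tendsto_const_nhds h1
          (fun n => (hv1 n).1.le) (fun n => (hv1 n).2.le)
      have hdct : Filter.Tendsto
          (fun n => ∫ ω, ({ω | U ω ≤ v n}).indicator Z ω ∂P) Filter.atTop
          (nhds (∫ ω, ({ω | U ω ≤ u}).indicator Z ω ∂P)) := by
        refine tendsto_integral_of_dominated_convergence (fun ω => ‖Z ω‖)
          (fun n => (hZ.1.indicator (hmeas (v n))))
          hZ.norm
          (fun n => Filter.Eventually.of_forall fun ω => norm_indicator_le_norm_self _ _)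
          (Filter.Eventually.of_forall fun ω => ?_)
        by_cases hω : U ω ≤ u
        · have he : ∀ n, ({ω | U ω ≤ v n}).indicator Z ω = Z ω := fun n =>
            indicator_of_mem (show ω ∈ {ω | U ω ≤ v n} from le_trans hω (hv1 n).1.le) Z
          have he' : ({ω | U ω ≤ u}).indicator Z ω = Z ω :=
            indicator_of_mem (show ω ∈ {ω | U ω ≤ u} from hω) Z
          simp only [he, he']
          exact tendsto_const_nhds
        · have hgt : u < U ω := lt_of_not_ge hω
          have hev : ∀ᶠ n in Filter.atTop, ({ω | U ω ≤ v n}).indicator Z ω = 0 := by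
            filter_upwards [hvt.eventually (eventually_lt_nhds hgt)] with n hn
            exact indicator_of_notMem (show ω ∉ {ω | U ω ≤ v n} from not_le.mpr hn) Z
          rw [show ({ω | U ω ≤ u}).indicator Z ω = 0 from
            indicator_of_notMem (show ω ∉ {ω | U ω ≤ u} from hω) Z]
          exact Filter.Tendsto.congr' (hev.mono fun n hn => hn.symm) tendsto_const_nhds
      have hzero : ∀ n, ∫ ω, ({ω | U ω ≤ v n}).indicator Z ω ∂P = 0 := fun n => by
        rw [integral_indicator (hmeas (v n))]; exact hv0 n
      have := tendsto_nhds_unique hdct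
        (tendsto_const_nhds.congr fun n => (hzero n).symm)
      rwa [integral_indicator (hmeas u)] at this
    -- Step 2: build two finite measures on ℝ and compare.
    set μp : Measure ℝ := (P.withDensity fun ω => ENNReal.ofReal (Z ω)).map U with hμp
    set μn : Measure ℝ := (P.withDensity fun ω => ENNReal.ofReal (-Z ω)).map U with hμn
    haveI : IsFiniteMeasure (P.withDensity fun ω => ENNReal.ofReal (Z ω)) :=
      isFiniteMeasure_withDensity_ofReal hZ.2
    haveI : IsFiniteMeasure (P.withDensity fun ω => ENNReal.ofReal (-Z ω)) :=
      isFiniteMeasure_withDensity_ofReal hZ.neg.2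
    haveI : IsFiniteMeasure μp := by rw [hμp]; infer_instance
    haveI : IsFiniteMeasure μn := by rw [hμn]; infer_instance
    have key : ∀ B : Set ℝ, MeasurableSet B →
        ∫ ω in U ⁻¹' B, Z ω ∂P = (μp B).toReal - (μn B).toReal := by
      intro B hB
      rw [hμp, hμn, Measure.map_apply hU hB, Measure.map_apply hU hB,
        withDensity_apply _ (hU hB), withDensity_apply _ (hU hB),
        integral_eq_lintegral_pos_part_sub_lintegral_neg_part hZ.restrict]
    have heq : μp = μn := by
      refine Measure.ext_of_Iic μp μn fun u => ?_
      have h0 := hall u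
      rw [show {ω | U ω ≤ u} = U ⁻¹' Iic u from rfl, key (Iic u) measurableSet_Iic] at h0
      exact (ENNReal.toReal_eq_toReal_iff' (measure_ne_top _ _) (measure_ne_top _ _)).mp
        (by linarith)
    -- Conclude via uniqueness of conditional expectation.
    have hzero : (fun _ : Ω => (0 : ℝ)) =ᵐ[P] P[Z|MeasurableSpace.comap U inferInstance] := by
      refine ae_eq_condExp_of_forall_setIntegral_eq hm hZ
        (fun s _ _ => integrableOn_zero) (fun s hs _ => ?_)
        (StronglyMeasurable.aestronglyMeasurable
          (@stronglyMeasurable_zero Ω ℝ (MeasurableSpace.comap U inferInstance) _ _))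
      obtain ⟨B, hB, rfl⟩ := hs
      rw [integral_zero, key B hB, heq, sub_self]
    exact hzero.symm
end

section
/- Let (Ω, F, P) be a probability space, H a separable real Hilbert space with orthonormal basis {Ψ_j}_{j≥1}, X : Ω → H a measurable random element and Z : Ω → ℝ an integrable random variable. Then the following are equivalent: (a) for every γ ∈ S_H and Lebesgue-almost every u ∈ ℝ, E[Z · 1{⟨X, γ⟩ ≤ u}] = 0; (b) for every integer p ≥ 1, every γ ∈ S_H^p and Lebesgue-almost every u ∈ ℝ, E[Z · 1{⟨X, γ⟩ ≤ u}] = 0. -/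
/-!
Approximate a unit vector `γ` by the normalised partial sums of its expansion in the Hilbert
basis; these are unit vectors in the spans of the first `p` basis vectors and converge to `γ`.
For every `u` outside the (countable, hence Lebesgue-null) set of atoms of `⟪X, γ⟫`, the
indicators of `{⟪X, γₚ⟫ ≤ u}` converge almost surely to that of `{⟪X, γ⟫ ≤ u}`, so by dominated
convergence the moments `E[Z · 1{⟪X, γₚ⟫ ≤ u}]`, which vanish, converge to `E[Z · 1{⟪X, γ⟫ ≤ u}]`.
-/

open MeasureTheory Filter
open scoped RealInnerProductSpace Topology

theorem tendsto_inv_norm_smul {𝕜 E ι : Type*} [RCLike 𝕜] [NormedAddCommGroup E] [NormedSpace 𝕜 E]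
    {l : Filter ι} {s : ι → E} {x : E} (hs : Tendsto s l (𝓝 x)) (hx : x ≠ 0) :
    Tendsto (fun i => (‖s i‖ : 𝕜)⁻¹ • s i) l (𝓝 ((‖x‖ : 𝕜)⁻¹ • x)) := by
  have hnorm : Tendsto (fun i => (‖s i‖ : 𝕜)) l (𝓝 (‖x‖ : 𝕜)) :=
    (RCLike.continuous_ofReal.tendsto _).comp hs.norm
  exact (hnorm.inv₀ (by simpa using hx)).smul hs

namespace HilbertBasis

variable {𝕜 E : Type*} [RCLike 𝕜] [NormedAddCommGroup E] [InnerProductSpace 𝕜 E]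

theorem sum_range_repr_smul_mem_span (b : HilbertBasis ℕ 𝕜 E) (x : E) (p : ℕ) :
    ∑ j ∈ Finset.range p, b.repr x j • b j ∈
      Submodule.span 𝕜 (Set.range fun j : Fin p => b j) :=
  Submodule.sum_mem _ fun j hj => Submodule.smul_mem _ _
    (Submodule.subset_span ⟨⟨j, Finset.mem_range.1 hj⟩, rfl⟩)

theorem exists_tendsto_of_norm_eq_one (b : HilbertBasis ℕ 𝕜 E) {x : E} (hx : ‖x‖ = 1) :
    ∃ y : ℕ → E, Tendsto y atTop (𝓝 x) ∧
      ∀ᶠ p in atTop, ‖y p‖ = 1 ∧ y p ∈ Submodule.span 𝕜 (Set.range fun j : Fin p => b j) := by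
  set s : ℕ → E := fun p => ∑ j ∈ Finset.range p, b.repr x j • b j
  have hx₀ : x ≠ 0 := norm_ne_zero_iff.1 (by simp [hx])
  have hs : Tendsto s atTop (𝓝 x) := (b.hasSum_repr x).tendsto_sum_nat
  refine ⟨fun p => (‖s p‖ : 𝕜)⁻¹ • s p, by simpa [hx] using tendsto_inv_norm_smul (𝕜 := 𝕜) hs hx₀, ?_⟩
  filter_upwards [hs.eventually_ne hx₀] with p hp
  exact ⟨norm_smul_inv_norm hp,
    Submodule.smul_mem _ _ (b.sum_range_repr_smul_mem_span x p)⟩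

end HilbertBasis

theorem eventually_le_iff_of_tendsto_of_ne {ι α : Type*} [LinearOrder α] [TopologicalSpace α]
    [OrderTopology α] {l : Filter ι} {x : ι → α} {a u : α} (hx : Tendsto x l (𝓝 a))
    (hau : a ≠ u) : ∀ᶠ i in l, (x i ≤ u ↔ a ≤ u) := by
  rcases hau.lt_or_gt with hlt | hgt
  · filter_upwards [hx.eventually (eventually_lt_nhds hlt)] with i hi
    exact iff_of_true hi.le hlt.le
  · filter_upwards [hx.eventually (eventually_gt_nhds hgt)] with i hi
    exact iff_of_false hi.not_ge hgt.not_ge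

theorem ae_measure_preimage_singleton_eq_zero {Ω β : Type*} [MeasurableSpace Ω]
    [MeasurableSpace β] [MeasurableSingletonClass β] {μ : Measure Ω} [SFinite μ] {f : Ω → β}
    (hf : Measurable f) (ν : Measure β) [NullSingletonClass ν] :
    ∀ᵐ t ∂ν, μ {ω | f ω = t} = 0 := by
  rw [ae_iff]
  exact measure_mono_null (fun t ht => pos_iff_ne_zero.2 ht)
    ((Measure.countable_meas_level_set_pos hf).measure_zero ν)

theorem ae_eventually_atTop_of_eventually_ae {α : Type*} [MeasurableSpace α] {μ : Measure α}
    {q : ℕ → α → Prop} (h : ∀ᶠ p in atTop, ∀ᵐ a ∂μ, q p a) :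
    ∀ᵐ a ∂μ, ∀ᶠ p in atTop, q p a := by
  obtain ⟨N, hN⟩ := eventually_atTop.1 h
  filter_upwards [ae_all_iff.2 fun p : {p // N ≤ p} => hN p p.2] with a ha
  exact eventually_atTop.2 ⟨N, fun p hp => ha ⟨p, hp⟩⟩

theorem tendsto_setIntegral_le_of_tendsto {Ω E : Type*} [MeasurableSpace Ω]
    [NormedAddCommGroup E] [NormedSpace ℝ E] {μ : Measure Ω} {f : ℕ → Ω → ℝ} {g : Ω → ℝ}
    {Z : Ω → E} {u : ℝ} (hf : ∀ n, Measurable (f n)) (hg : Measurable g) (hZ : Integrable Z μ)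
    (hfg : ∀ᵐ ω ∂μ, Tendsto (fun n => f n ω) atTop (𝓝 (g ω))) (hgu : μ {ω | g ω = u} = 0) :
    Tendsto (fun n => ∫ ω in {ω | f n ω ≤ u}, Z ω ∂μ) atTop
      (𝓝 (∫ ω in {ω | g ω ≤ u}, Z ω ∂μ)) := by
  have hset : ∀ h : Ω → ℝ, Measurable h → MeasurableSet {ω | h ω ≤ u} :=
    fun h hh => measurableSet_le hh measurable_const
  simp only [← integral_indicator (hset _ (hf _)), ← integral_indicator (hset g hg)]
  refine tendsto_integral_of_dominated_convergence (‖Z ·‖)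
    (fun n => hZ.1.indicator (hset _ (hf n))) hZ.norm
    (fun n => ae_of_all _ fun ω => norm_indicator_le_norm_self Z ω) ?_
  have hgu' : ∀ᵐ ω ∂μ, g ω ≠ u := measure_eq_zero_iff_ae_notMem.1 hgu
  filter_upwards [hfg, hgu'] with ω hω hωu
  refine tendsto_const_nhds.congr' ?_
  filter_upwards [eventually_le_iff_of_tendsto_of_ne hω hωu] with n hn
  simp only [Set.indicator, Set.mem_ofPred_eq, hn]

theorem stmt_13_general {Ω H : Type*} [MeasurableSpace Ω]
    [NormedAddCommGroup H] [InnerProductSpace ℝ H]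
    [MeasurableSpace H] [BorelSpace H]
    (Ψ : HilbertBasis ℕ ℝ H)
    (P : Measure Ω) [IsProbabilityMeasure P]
    (X : Ω → H) (hX : Measurable X)
    (Z : Ω → ℝ) (hZ : Integrable Z P) :
    (∀ γ : H, ‖γ‖ = 1 →
        ∀ᵐ u ∂(volume : Measure ℝ), ∫ ω in {ω | ⟪X ω, γ⟫ ≤ u}, Z ω ∂P = 0) ↔
      (∀ p : ℕ, 1 ≤ p →
        ∀ γ ∈ Submodule.span ℝ (Set.range fun j : Fin p => Ψ j), ‖γ‖ = 1 →
          ∀ᵐ u ∂(volume : Measure ℝ), ∫ ω in {ω | ⟪X ω, γ⟫ ≤ u}, Z ω ∂P = 0) := by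
  refine ⟨fun h p _ γ _ hγ => h γ hγ, fun h γ hγ => ?_⟩
  have hinner : ∀ δ : H, Measurable fun ω => ⟪X ω, δ⟫ :=
    fun δ => (continuous_id.inner continuous_const).measurable.comp hX
  obtain ⟨γ', hγ'γ, hγ'⟩ := Ψ.exists_tendsto_of_norm_eq_one hγ
  have hzero : ∀ᵐ u ∂(volume : Measure ℝ),
      ∀ᶠ p in atTop, ∫ ω in {ω | ⟪X ω, γ' p⟫ ≤ u}, Z ω ∂P = 0 :=
    ae_eventually_atTop_of_eventually_ae <| (hγ'.and (eventually_ge_atTop 1)).mono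
      fun p ⟨⟨hnorm, hmem⟩, hp⟩ => h p hp _ hmem hnorm
  filter_upwards [hzero, ae_measure_preimage_singleton_eq_zero (μ := P) (hinner γ) volume]
    with u hu hatom
  have hconv := tendsto_setIntegral_le_of_tendsto (fun p => hinner (γ' p)) (hinner γ) hZ
    (ae_of_all _ fun ω => tendsto_const_nhds.inner hγ'γ) hatom
  exact tendsto_nhds_unique_of_eventuallyEq hconv tendsto_const_nhds hu

/-- Equivalence V ⟺ VI of Lemma 2: the moment condition
`E[Z · 1{⟨X, γ⟩ ≤ u}] = 0` for a.e. `u` holds for every unit-norm `γ ∈ H` iff it holds for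
every `p ≥ 1` and every unit-norm `γ` in the span of the first `p` orthonormal basis
elements. -/
theorem stmt_13 {Ω H : Type*} [MeasurableSpace Ω]
    [NormedAddCommGroup H] [InnerProductSpace ℝ H] [CompleteSpace H]
    [TopologicalSpace.SeparableSpace H] [MeasurableSpace H] [BorelSpace H]
    (Ψ : HilbertBasis ℕ ℝ H)
    (P : Measure Ω) [IsProbabilityMeasure P]
    (X : Ω → H) (hX : Measurable X)
    (Z : Ω → ℝ) (hZ : Integrable Z P) :
    (∀ γ : H, ‖γ‖ = 1 →
        ∀ᵐ u ∂(volume : Measure ℝ), ∫ ω in {ω | ⟪X ω, γ⟫ ≤ u}, Z ω ∂P = 0) ↔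
      (∀ p : ℕ, 1 ≤ p →
        ∀ γ ∈ Submodule.span ℝ (Set.range fun j : Fin p => Ψ j), ‖γ‖ = 1 →
          ∀ᵐ u ∂(volume : Measure ℝ), ∫ ω in {ω | ⟪X ω, γ⟫ ≤ u}, Z ω ∂P = 0) :=
  stmt_13_general Ψ P X hX Z hZ
end
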